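/- Under randomization of Z, exclusion restriction, and monotonicity Y₀ ≤ Y₁, for each z ∈ {0,1}: P(R_z = 1, Y₀ = 0, Y₁ = 1) = P(Y = 1 | Z = z) − P(Y₀ = 1). -/
import Mathlib

open Finset
open scoped Classical

namespace PS

/-- Probability of an event `A` under weight function `p` on a finite sample space. -/
noncomputable def Prob {Ω : Type*} [Fintype Ω] (p : Ω → ℝ) (A : Ω → Prop) : ℝ :=
  ∑ ω ∈ Finset.univ.filter A, p ω

/-- Conditional probability `P(A | B)`. -/
noncomputable def CProb {Ω : Type*} [Fintype Ω] (p : Ω → ℝ) (A B : Ω → Prop) : ℝ :=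
  Prob p (fun ω => A ω ∧ B ω) / Prob p B

/-- Conditional expectation `E[f | B]`. -/
noncomputable def CExp {Ω : Type*} [Fintype Ω] (p : Ω → ℝ) (f : Ω → ℝ) (B : Ω → Prop) : ℝ :=
  (∑ ω ∈ Finset.univ.filter B, p ω * f ω) / Prob p B

/-- Indicator of a Boolean value, as a real number. -/
def ind (b : Bool) : ℝ := if b then 1 else 0

/-- Observed recommendation `R = R_Z`. -/
def obsR {Ω : Type*} (Z R₀ R₁ : Ω → Bool) (ω : Ω) : Bool := if Z ω then R₁ ω else R₀ ω

/-- Observed outcome `Y = Y_R` (exclusion restriction). -/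
def obsY {Ω : Type*} (Rv Y₀ Y₁ : Ω → Bool) (ω : Ω) : Bool := if Rv ω then Y₁ ω else Y₀ ω

/-- `Z` is independent of the vector `(R₀, R₁, Y₀, Y₁)`. -/
def IndepZ {Ω : Type*} [Fintype Ω] (p : Ω → ℝ) (Z R₀ R₁ Y₀ Y₁ : Ω → Bool) : Prop :=
  ∀ z a b c d : Bool,
    Prob p (fun ω => Z ω = z ∧ R₀ ω = a ∧ R₁ ω = b ∧ Y₀ ω = c ∧ Y₁ ω = d) =
      Prob p (fun ω => Z ω = z) *
        Prob p (fun ω => R₀ ω = a ∧ R₁ ω = b ∧ Y₀ ω = c ∧ Y₁ ω = d)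

lemma Prob_congr {Ω : Type*} [Fintype Ω] (p : Ω → ℝ) {A B : Ω → Prop}
    (h : ∀ ω, A ω ↔ B ω) : Prob p A = Prob p B := by
  unfold Prob; congr 1; ext ω; simp [h ω]

lemma Prob_fiber {Ω V : Type*} [Fintype Ω] [Fintype V] [DecidableEq V]
    (p : Ω → ℝ) (B : Ω → Prop) (g : Ω → V) (f : V → Prop) :
    Prob p (fun ω => B ω ∧ f (g ω)) =
      ∑ v ∈ univ.filter f, Prob p (fun ω => B ω ∧ g ω = v) := by
  have hdisj : (↑(Finset.univ.filter f) : Set V).PairwiseDisjoint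
      (fun v => Finset.univ.filter (fun ω => B ω ∧ g ω = v)) := by
    intro v _ w _ hvw
    simp only [Function.onFun, Finset.disjoint_left, Finset.mem_filter, Finset.mem_univ, true_and]
    rintro ω ⟨_, rfl⟩ ⟨_, h⟩
    exact hvw h
  have hset : Prob p (fun ω => B ω ∧ f (g ω)) =
      ∑ ω ∈ (Finset.univ.filter f).biUnion
        (fun v => Finset.univ.filter (fun ω => B ω ∧ g ω = v)), p ω := by
    rw [Prob]
    congr 1
    ext ω
    simp only [Finset.mem_biUnion, Finset.mem_filter, Finset.mem_univ, true_and]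
    constructor
    · rintro ⟨hB, hf⟩; exact ⟨g ω, hf, hB, rfl⟩
    · rintro ⟨v, hf, hB, rfl⟩; exact ⟨hB, hf⟩
  rw [hset, Finset.sum_biUnion hdisj]
  refine Finset.sum_congr rfl fun v _ => ?_
  rw [Prob]
  congr 1
  ext ω
  simp

lemma Prob_fiber' {Ω V : Type*} [Fintype Ω] [Fintype V] [DecidableEq V]
    (p : Ω → ℝ) (g : Ω → V) (f : V → Prop) :
    Prob p (fun ω => f (g ω)) = ∑ v ∈ univ.filter f, Prob p (fun ω => g ω = v) := by
  have h := Prob_fiber p (fun _ : Ω => True) g f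
  have e1 : Prob p (fun ω => (fun _ : Ω => True) ω ∧ f (g ω)) = Prob p (fun ω => f (g ω)) :=
    Prob_congr p fun ω => by simp
  rw [e1] at h
  rw [h]
  exact Finset.sum_congr rfl fun v _ => Prob_congr p fun ω => by simp

lemma Prob_add_disjoint {Ω : Type*} [Fintype Ω] (p : Ω → ℝ) {A B : Ω → Prop}
    (h : ∀ ω, ¬(A ω ∧ B ω)) :
    Prob p (fun ω => A ω ∨ B ω) = Prob p A + Prob p B := by
  unfold Prob
  rw [← Finset.sum_union]
  · congr 1; ext ω; simp
  · rw [Finset.disjoint_filter]; intro ω _ hA hB; exact h ω ⟨hA, hB⟩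

theorem stmt3 {Ω : Type*} [Fintype Ω] (p : Ω → ℝ) (Z R₀ R₁ Y₀ Y₁ : Ω → Bool)
    (hp : ∀ ω, 0 ≤ p ω) (hsum : ∑ ω, p ω = 1)
    (hZpos : ∀ z : Bool, 0 < Prob p (fun ω => Z ω = z))
    (hindep : IndepZ p Z R₀ R₁ Y₀ Y₁)
    (hmono : ∀ ω, Y₀ ω = true → Y₁ ω = true) :
    ∀ z : Bool,
      Prob p (fun ω => (if z then R₁ ω else R₀ ω) = true ∧ Y₀ ω = false ∧ Y₁ ω = true) =
        CProb p (fun ω => obsY (obsR Z R₀ R₁) Y₀ Y₁ ω = true) (fun ω => Z ω = z) - Prob p (fun ω => Y₀ ω = true) := by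
  intro z
  have hPz := hZpos z
  set g : Ω → Bool × Bool × Bool × Bool := fun ω => (R₀ ω, R₁ ω, Y₀ ω, Y₁ ω) with hg
  set f : Bool × Bool × Bool × Bool → Prop :=
    fun v => (if (if z then v.2.1 else v.1) then v.2.2.2 else v.2.2.1) = true with hf
  have h1 : Prob p (fun ω => obsY (obsR Z R₀ R₁) Y₀ Y₁ ω = true ∧ Z ω = z)
      = Prob p (fun ω => Z ω = z ∧ f (g ω)) := by
    refine Prob_congr p fun ω => ?_
    rw [and_comm]
    refine and_congr_right fun hZ => ?_
    simp [obsY, obsR, hZ, hf, hg]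
  have h2 : ∀ v : Bool × Bool × Bool × Bool,
      Prob p (fun ω => Z ω = z ∧ g ω = v)
        = Prob p (fun ω => Z ω = z) * Prob p (fun ω => g ω = v) := by
    intro v
    have e1 : Prob p (fun ω => Z ω = z ∧ g ω = v)
        = Prob p (fun ω => Z ω = z ∧ R₀ ω = v.1 ∧ R₁ ω = v.2.1 ∧ Y₀ ω = v.2.2.1 ∧ Y₁ ω = v.2.2.2) :=
      Prob_congr p fun ω => by simp [hg, Prod.ext_iff, and_assoc]
    have e2 : Prob p (fun ω => g ω = v)
        = Prob p (fun ω => R₀ ω = v.1 ∧ R₁ ω = v.2.1 ∧ Y₀ ω = v.2.2.1 ∧ Y₁ ω = v.2.2.2) :=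
      Prob_congr p fun ω => by simp [hg, Prod.ext_iff, and_assoc]
    rw [e1, e2, hindep z v.1 v.2.1 v.2.2.1 v.2.2.2]
  have h3 : Prob p (fun ω => Z ω = z ∧ f (g ω))
      = Prob p (fun ω => Z ω = z) * Prob p (fun ω => f (g ω)) := by
    rw [Prob_fiber p (fun ω => Z ω = z) g f, Prob_fiber' p g f, Finset.mul_sum]
    exact Finset.sum_congr rfl fun v _ => h2 v
  have hC : CProb p (fun ω => obsY (obsR Z R₀ R₁) Y₀ Y₁ ω = true) (fun ω => Z ω = z)
      = Prob p (fun ω => f (g ω)) := by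
    rw [CProb, h1, h3, mul_comm, mul_div_assoc, div_self (ne_of_gt hPz), mul_one]
  rw [hC]
  have hdis : ∀ ω, ¬(((if z then R₁ ω else R₀ ω) = true ∧ Y₀ ω = false ∧ Y₁ ω = true)
      ∧ Y₀ ω = true) := by
    rintro ω ⟨⟨_, hc, _⟩, hc'⟩
    rw [hc] at hc'
    exact Bool.false_ne_true hc'
  have hsplit : Prob p (fun ω => f (g ω)) =
      Prob p (fun ω => (if z then R₁ ω else R₀ ω) = true ∧ Y₀ ω = false ∧ Y₁ ω = true)
        + Prob p (fun ω => Y₀ ω = true) := by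
    rw [← Prob_add_disjoint p hdis]
    refine Prob_congr p fun ω => ?_
    have hm := hmono ω
    simp only [hf, hg]
    cases hr : (if z then R₁ ω else R₀ ω) <;> cases hc : Y₀ ω <;> cases hd : Y₁ ω <;>
      simp_all
  rw [hsplit]
  ring

end PS
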